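/- arXiv:1202.0867 — 3 statements merged into one kernel-verified Lean document; each statement's English description precedes it below -/
import Mathlib

section
/- Let V ⊆ Ω be a finite set of sites that forms a (C,P)-Delone set with respect to D^{LS}, let σ0 be the worst-case metric variation of M, assume C·σ0 < 1, and set k = (1 + C·σ0)/(1 − C·σ0). If v, w ∈ V are distinct sites whose Labelle/Shewchuk Voronoi regions share a point (regions taken with respect to D^{LS}), then P/k ≤ ‖M_v(v − w)‖ ≤ C(1 + k). -/
open Matrix Set

attribute [local instance] Matrix.normedAddCommGroup Matrix.normedSpace

/-- The application of a matrix to a vector of Euclidean space. -/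
noncomputable def mav {n : ℕ} (A : Matrix (Fin n) (Fin n) ℝ)
    (x : EuclideanSpace ℝ (Fin n)) : EuclideanSpace ℝ (Fin n) :=
  Matrix.toEuclideanLin A x

/-- The spectral (operator) norm `ρ` of a matrix. -/
noncomputable def rho {n : ℕ} (A : Matrix (Fin n) (Fin n) ℝ) : ℝ :=
  ‖LinearMap.toContinuousLinearMap (Matrix.toEuclideanLin A)‖

/-- The smallest singular value `ρ_m` of an (invertible) matrix: `ρ_m(A) = ρ(A⁻¹)⁻¹`. -/
noncomputable def rhom {n : ℕ} (A : Matrix (Fin n) (Fin n) ℝ) : ℝ :=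
  (rho A⁻¹)⁻¹

/-- The Voronoi region of a site `v ∈ V` inside `Ω`, w.r.t. an asymmetric distance `D`. -/
def vorRegion {n : ℕ} (Ω V : Set (EuclideanSpace ℝ (Fin n)))
    (D : EuclideanSpace ℝ (Fin n) → EuclideanSpace ℝ (Fin n) → ℝ)
    (v : EuclideanSpace ℝ (Fin n)) : Set (EuclideanSpace ℝ (Fin n)) :=
  {p ∈ Ω | ∀ w ∈ V, D p v ≤ D p w}

/-- The set of ratios whose supremum is the worst-case metric variation `σ0`. -/
def sigma0Set {n : ℕ} (Ω : Set (EuclideanSpace ℝ (Fin n)))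
    (M : EuclideanSpace ℝ (Fin n) → Matrix (Fin n) (Fin n) ℝ) : Set ℝ :=
  {x | ∃ a ∈ Ω, ∃ b ∈ Ω, a ≠ b ∧
    x = rho (M b * (M a)⁻¹ - 1) / ‖mav (M a) (a - b)‖}

/-- The set of ratios whose supremum is the differentiable-metric variation `σ1`
(the directional derivative of `M` at `p` in direction `r` is `fderivWithin ℝ M Ω p r`). -/
noncomputable def sigma1Set {n : ℕ} (Ω : Set (EuclideanSpace ℝ (Fin n)))
    (M : EuclideanSpace ℝ (Fin n) → Matrix (Fin n) (Fin n) ℝ) : Set ℝ :=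
  {x | ∃ p ∈ Ω, ∃ r : EuclideanSpace ℝ (Fin n), ‖r‖ = 1 ∧
    x = rho ((fderivWithin ℝ M Ω p r) * (M p)⁻¹) / ‖mav (M p) r‖}

lemma mav_mul {n : ℕ} (A B : Matrix (Fin n) (Fin n) ℝ) (x : EuclideanSpace ℝ (Fin n)) :
    mav (A * B) x = mav A (mav B x) := by
  simp [mav, Matrix.toEuclideanLin_apply, Matrix.mulVec_mulVec]

lemma mav_one {n : ℕ} (x : EuclideanSpace ℝ (Fin n)) : mav 1 x = x := by
  simp [mav, Matrix.toEuclideanLin_apply]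

lemma mav_add {n : ℕ} (A B : Matrix (Fin n) (Fin n) ℝ) (x : EuclideanSpace ℝ (Fin n)) :
    mav (A + B) x = mav A x + mav B x := by
  simp [mav]

lemma mav_sub_vec {n : ℕ} (A : Matrix (Fin n) (Fin n) ℝ) (x y : EuclideanSpace ℝ (Fin n)) :
    mav A (x - y) = mav A x - mav A y := by
  simp [mav]

lemma norm_mav_le {n : ℕ} (A : Matrix (Fin n) (Fin n) ℝ) (x : EuclideanSpace ℝ (Fin n)) :
    ‖mav A x‖ ≤ rho A * ‖x‖ := by
  exact (LinearMap.toContinuousLinearMap (Matrix.toEuclideanLin A)).le_opNorm x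

lemma mav_neg_vec {n : ℕ} (A : Matrix (Fin n) (Fin n) ℝ) (x : EuclideanSpace ℝ (Fin n)) :
    mav A (-x) = -(mav A x) := by simp [mav]

lemma mav_ne_zero {n : ℕ} {A : Matrix (Fin n) (Fin n) ℝ} (hA : A.PosDef)
    {x : EuclideanSpace ℝ (Fin n)} (hx : x ≠ 0) : mav A x ≠ 0 := by
  have hdet : IsUnit A.det := isUnit_iff_ne_zero.mpr (ne_of_gt hA.det_pos)
  intro h
  have : mav A⁻¹ (mav A x) = x := by
    rw [← mav_mul, Matrix.nonsing_inv_mul A hdet, mav_one]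
  rw [h] at this
  apply hx
  rw [← this]
  simp [mav]


lemma key_bound {n : ℕ} (Ω : Set (EuclideanSpace ℝ (Fin n)))
    (M : EuclideanSpace ℝ (Fin n) → Matrix (Fin n) (Fin n) ℝ)
    (hMpd : ∀ p ∈ Ω, (M p).PosDef) (σ0 : ℝ) (hσ0 : IsLUB (sigma0Set Ω M) σ0)
    (hσ0nn : 0 ≤ σ0) {a b : EuclideanSpace ℝ (Fin n)} (ha : a ∈ Ω) (hb : b ∈ Ω)
    (x : EuclideanSpace ℝ (Fin n)) :
    ‖mav (M b) x‖ ≤ (1 + σ0 * ‖mav (M a) (a - b)‖) * ‖mav (M a) x‖ := by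
  by_cases hab : a = b
  · subst hab
    have h1 : (0:ℝ) ≤ σ0 * ‖mav (M a) (a - a)‖ :=
      mul_nonneg hσ0nn (norm_nonneg _)
    nlinarith [norm_nonneg (mav (M a) x)]
  · set d := ‖mav (M a) (a - b)‖ with hd
    have hdpos : 0 < d := by
      apply norm_pos_iff.mpr
      exact mav_ne_zero (hMpd a ha) (sub_ne_zero.mpr hab)
    have hmem : rho (M b * (M a)⁻¹ - 1) / d ∈ sigma0Set Ω M :=
      ⟨a, ha, b, hb, hab, rfl⟩
    have hle : rho (M b * (M a)⁻¹ - 1) ≤ σ0 * d := by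
      have := hσ0.1 hmem
      rw [div_le_iff₀ hdpos] at this
      linarith
    have hdet : IsUnit (M a).det := isUnit_iff_ne_zero.mpr (ne_of_gt (hMpd a ha).det_pos)
    have hMb : M b = (M b * (M a)⁻¹ - 1) * M a + M a := by
      rw [sub_mul, one_mul, mul_assoc, Matrix.nonsing_inv_mul _ hdet, mul_one]
      abel
    have hdec : mav (M b) x = mav (M b * (M a)⁻¹ - 1) (mav (M a) x) + mav (M a) x := by
      conv_lhs => rw [hMb]
      rw [mav_add, mav_mul]
    rw [hdec]
    calc ‖mav (M b * (M a)⁻¹ - 1) (mav (M a) x) + mav (M a) x‖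
        ≤ ‖mav (M b * (M a)⁻¹ - 1) (mav (M a) x)‖ + ‖mav (M a) x‖ := norm_add_le _ _
      _ ≤ rho (M b * (M a)⁻¹ - 1) * ‖mav (M a) x‖ + ‖mav (M a) x‖ := by
          linarith [norm_mav_le (M b * (M a)⁻¹ - 1) (mav (M a) x)]
      _ ≤ σ0 * d * ‖mav (M a) x‖ + ‖mav (M a) x‖ := by
          nlinarith [norm_nonneg (mav (M a) x)]
      _ = (1 + σ0 * d) * ‖mav (M a) x‖ := by ring


set_option maxHeartbeats 1000000 in
theorem stmt1 {n : ℕ} (Ω : Set (EuclideanSpace ℝ (Fin n)))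
    (hΩc : IsCompact Ω) (hΩconv : Convex ℝ Ω)
    (M : EuclideanSpace ℝ (Fin n) → Matrix (Fin n) (Fin n) ℝ)
    (hMcont : ContinuousOn M Ω) (hMpd : ∀ p ∈ Ω, (M p).PosDef)
    (V : Set (EuclideanSpace ℝ (Fin n))) (hVfin : V.Finite) (hVsub : V ⊆ Ω)
    (C P σ0 k : ℝ) (hσ0 : IsLUB (sigma0Set Ω M) σ0)
    (hCσO : C * σ0 < 1) (hk : k = (1 + C * σ0) / (1 - C * σ0))
    (hcover : ∀ p ∈ Ω, ∃ v ∈ V, ‖mav (M p) (p - v)‖ ≤ C)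
    (hpack : ∀ v ∈ V, ∀ w ∈ V, v ≠ w →
      P ≤ ‖mav (M v) (v - w)‖ ∨ P ≤ ‖mav (M w) (w - v)‖)
    (v w : EuclideanSpace ℝ (Fin n)) (hv : v ∈ V) (hw : w ∈ V) (hvw : v ≠ w)
    (hshare : ∃ c, c ∈ vorRegion Ω V (fun a b => ‖mav (M a) (a - b)‖) v ∩ vorRegion Ω V (fun a b => ‖mav (M a) (a - b)‖) w) :
    P / k ≤ ‖mav (M v) (v - w)‖ ∧ ‖mav (M v) (v - w)‖ ≤ C * (1 + k) := by
  obtain ⟨c, ⟨hcΩ, hcv⟩, ⟨_, hcw⟩⟩ := hshare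
  have hvΩ : v ∈ Ω := hVsub hv
  have hwΩ : w ∈ Ω := hVsub hw
  -- σ0 ≥ 0
  have hσ0nn : 0 ≤ σ0 := by
    have hd : 0 < ‖mav (M v) (v - w)‖ :=
      norm_pos_iff.mpr (mav_ne_zero (hMpd v hvΩ) (sub_ne_zero.mpr hvw))
    have hmem : rho (M w * (M v)⁻¹ - 1) / ‖mav (M v) (v - w)‖ ∈ sigma0Set Ω M :=
      ⟨v, hvΩ, w, hwΩ, hvw, rfl⟩
    have := hσ0.1 hmem
    have hnn : (0:ℝ) ≤ rho (M w * (M v)⁻¹ - 1) / ‖mav (M v) (v - w)‖ :=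
      div_nonneg (norm_nonneg _) hd.le
    linarith
  -- distances from c
  obtain ⟨u, hu, huC⟩ := hcover c hcΩ
  have ht1C : ‖mav (M c) (c - v)‖ ≤ C := le_trans (hcv u hu) huC
  have ht2C : ‖mav (M c) (c - w)‖ ≤ C := le_trans (hcw u hu) huC
  set t1 := ‖mav (M c) (c - v)‖ with ht1
  set t2 := ‖mav (M c) (c - w)‖ with ht2
  have ht1nn : 0 ≤ t1 := norm_nonneg _
  have ht2nn : 0 ≤ t2 := norm_nonneg _
  clear_value t1 t2
  have hCnn : 0 ≤ C := le_trans ht1nn ht1C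
  have hs1 : 1 - C * σ0 > 0 := by linarith
  have hσ0t1 : σ0 * t1 ≤ C * σ0 := by nlinarith
  -- ‖M_v (v - c)‖ bound
  have h1 : ‖mav (M v) (v - c)‖ ≤ (1 + σ0 * t1) * t1 := by
    have := key_bound Ω M hMpd σ0 hσ0 hσ0nn hcΩ hvΩ (c - v)
    have hneg : mav (M v) (v - c) = -(mav (M v) (c - v)) := by
      rw [← mav_neg_vec]; congr 1; abel
    rw [hneg, norm_neg, ht1]
    exact this
  -- ‖M_v (c - w)‖ bound
  have h2 : ‖mav (M v) (c - w)‖ ≤ (1 + σ0 * t1) * t2 := by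
    rw [ht1, ht2]
    exact key_bound Ω M hMpd σ0 hσ0 hσ0nn hcΩ hvΩ (c - w)
  -- triangle
  have htri : ‖mav (M v) (v - w)‖ ≤ ‖mav (M v) (v - c)‖ + ‖mav (M v) (c - w)‖ := by
    have hsp : v - w = (v - c) + (c - w) := by abel
    rw [hsp]
    have : mav (M v) ((v - c) + (c - w)) = mav (M v) (v - c) + mav (M v) (c - w) := by
      simp [mav, map_add]
    rw [this]; exact norm_add_le _ _
  set D := ‖mav (M v) (v - w)‖ with hD
  have hDnn : 0 ≤ D := norm_nonneg _
  have hs : 0 ≤ C * σ0 := mul_nonneg hCnn hσ0nn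
  have hA : (1 + σ0 * t1) * t1 ≤ (1 + C * σ0) * C := by nlinarith
  have hB : (1 + σ0 * t1) * t2 ≤ (1 + C * σ0) * C := by nlinarith
  have hDle : D ≤ 2 * C * (1 + C * σ0) := by nlinarith
  have hupper : D ≤ C * (1 + k) := by
    have hCk : C * (1 + k) = 2 * C / (1 - C * σ0) := by
      rw [hk]; field_simp; ring
    rw [hCk, le_div_iff₀ hs1]
    nlinarith [mul_le_mul_of_nonneg_right hDle hs1.le, mul_nonneg hCnn (mul_nonneg hs hs)]
  refine ⟨?_, hupper⟩
  -- lower bound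
  have hk1 : 1 ≤ k := by
    rw [hk, le_div_iff₀ hs1]; nlinarith
  have hkpos : 0 < k := lt_of_lt_of_le one_pos hk1
  rcases hpack v hv w hw hvw with hP | hP
  · rw [div_le_iff₀ hkpos]
    calc P ≤ D := hP
      _ ≤ D * k := by nlinarith
  · -- P ≤ ‖M_w (w - v)‖ ≤ (1 + σ0 * D) * D ≤ k * D
    have hswap : ‖mav (M w) (w - v)‖ ≤ (1 + σ0 * D) * D := by
      have := key_bound Ω M hMpd σ0 hσ0 hσ0nn hvΩ hwΩ (v - w)
      have hneg : mav (M w) (w - v) = -(mav (M w) (v - w)) := by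
        rw [← mav_neg_vec]; congr 1; abel
      rw [hneg, norm_neg, hD]
      exact this
    have hkD : (1 + σ0 * D) * D ≤ k * D := by
      apply mul_le_mul_of_nonneg_right _ hDnn
      rw [hk, le_div_iff₀ hs1]
      have h3 : σ0 * D ≤ σ0 * (2 * C * (1 + C * σ0)) := mul_le_mul_of_nonneg_left hDle hσ0nn
      nlinarith [mul_le_mul_of_nonneg_right h3 hs1.le, mul_nonneg hs (mul_nonneg hs hs)]
    rw [div_le_iff₀ hkpos]
    calc P ≤ ‖mav (M w) (w - v)‖ := hP
      _ ≤ k * D := le_trans hswap hkD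
      _ = D * k := by ring
end

section
/- Let τ ⊆ ℝⁿ be the convex hull of finitely many points v_1, …, v_s, and let M be a symmetric positive-definite matrix field that is affine on τ, so that its partial derivative in the k-th coordinate direction is a constant matrix M^k on the interior of τ. Let λ₁(p) denote the smallest eigenvalue of M_p. Then, for every p in the interior of τ and every unit vector r, ρ((D_r M)·M_p⁻¹)/‖M_p r‖ ≤ [ Σ_{k=1}^{n} ρ(M^k)² ]^{1/2} / ( min_{j=1,…,s} λ₁(v_j) )², where D_r M = Σ_k r_k M^k is the (constant) directional derivative of M in direction r. -/
open Matrix Set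

attribute [local instance] Matrix.normedAddCommGroup Matrix.normedSpace

/-- The smallest eigenvalue `λ₁` of a (symmetric positive-definite) matrix. -/
noncomputable def lam1 {n : ℕ} (A : Matrix (Fin n) (Fin n) ℝ) : ℝ :=
  sInf {x : ℝ | Module.End.HasEigenvalue (Matrix.toEuclideanLin A) x}

/-!
With `c = min_j λ₁(v_j)`, every vertex matrix satisfies `c ‖x‖² ≤ ⟪M_{v_j} x, x⟫`. Because `M` is
affine, `⟪M_p x, x⟫` is affine in `p`, so this coercivity bound holds on all of `τ`. It gives
`‖M_p r‖ ≥ c` for unit `r` and `ρ(M_p⁻¹) ≤ c⁻¹`, while Cauchy–Schwarz bounds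
`ρ(D_r M) ≤ ∑ |r_k| ρ(M^k)` by `(∑ ρ(M^k)²)^{1/2}`.
-/

section SpectralNorm

variable {n : ℕ}

lemma rho_eq_norm_toEuclideanCLM (A : Matrix (Fin n) (Fin n) ℝ) :
    rho A = ‖toEuclideanCLM (n := Fin n) (𝕜 := ℝ) A‖ := rfl

lemma rho_nonneg (A : Matrix (Fin n) (Fin n) ℝ) : 0 ≤ rho A := norm_nonneg _

lemma rho_mul_le (A B : Matrix (Fin n) (Fin n) ℝ) : rho (A * B) ≤ rho A * rho B := by
  simpa only [rho_eq_norm_toEuclideanCLM, map_mul] using norm_mul_le _ _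

lemma rho_smul (c : ℝ) (A : Matrix (Fin n) (Fin n) ℝ) : rho (c • A) = |c| * rho A := by
  simp only [rho_eq_norm_toEuclideanCLM, map_smul, norm_smul, Real.norm_eq_abs]

lemma rho_sum_le {ι : Type*} (s : Finset ι) (B : ι → Matrix (Fin n) (Fin n) ℝ) :
    rho (∑ k ∈ s, B k) ≤ ∑ k ∈ s, rho (B k) := by
  simpa only [rho_eq_norm_toEuclideanCLM, map_sum] using norm_sum_le _ _

lemma rho_sum_smul_le {ι : Type*} [Fintype ι] (r : EuclideanSpace ℝ ι)
    (B : ι → Matrix (Fin n) (Fin n) ℝ) :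
    rho (∑ k, r k • B k) ≤ ‖r‖ * √(∑ k, rho (B k) ^ 2) :=
  calc rho (∑ k, r k • B k) ≤ ∑ k, |r k| * rho (B k) := by
        simpa only [rho_smul] using rho_sum_le Finset.univ fun k => r k • B k
    _ ≤ √(∑ k, |r k| ^ 2) * √(∑ k, rho (B k) ^ 2) := Real.sum_mul_le_sqrt_mul_sqrt _ _ _
    _ = ‖r‖ * √(∑ k, rho (B k) ^ 2) := by
        simp only [EuclideanSpace.norm_eq, Real.norm_eq_abs]

end SpectralNorm

lemma mul_norm_le_norm_of_mul_norm_sq_le_inner {E : Type*} [NormedAddCommGroup E]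
    [InnerProductSpace ℝ E] {T : E → E} {c : ℝ} {x : E} (h : c * ‖x‖ ^ 2 ≤ inner ℝ (T x) x) :
    c * ‖x‖ ≤ ‖T x‖ := by
  rcases eq_or_ne x 0 with rfl | hx
  · simp
  refine le_of_mul_le_mul_right ?_ (norm_pos_iff.2 hx)
  calc c * ‖x‖ * ‖x‖ = c * ‖x‖ ^ 2 := by ring
    _ ≤ ‖T x‖ * ‖x‖ := h.trans (real_inner_le_norm _ _)

section Coercive

variable {n : ℕ}

lemma rho_inv_le_inv {A : Matrix (Fin n) (Fin n) ℝ} (hA : IsUnit A.det) {c : ℝ} (hc : 0 < c)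
    (h : ∀ x, c * ‖x‖ ≤ ‖toEuclideanLin A x‖) : rho A⁻¹ ≤ c⁻¹ := by
  refine ContinuousLinearMap.opNorm_le_bound _ (inv_nonneg.2 hc.le) fun y => ?_
  have hy : toEuclideanLin A (toEuclideanLin A⁻¹ y) = y := by
    rw [← LinearMap.comp_apply, ← toLpLin_mul_same, mul_nonsing_inv A hA, toLpLin_one,
      LinearMap.id_apply]
  show ‖toEuclideanLin A⁻¹ y‖ ≤ c⁻¹ * ‖y‖
  rw [le_inv_mul_iff₀ hc]
  simpa only [hy] using h (toEuclideanLin A⁻¹ y)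

lemma rho_mul_inv_div_norm_le (D : Matrix (Fin n) (Fin n) ℝ) {B : Matrix (Fin n) (Fin n) ℝ}
    (hB : IsUnit B.det) {c : ℝ} (hc : 0 < c)
    (h : ∀ x, c * ‖x‖ ^ 2 ≤ inner ℝ (toEuclideanLin B x) x)
    {r : EuclideanSpace ℝ (Fin n)} (hr : ‖r‖ = 1) :
    rho (D * B⁻¹) / ‖mav B r‖ ≤ rho D / c ^ 2 := by
  have hBr : c ≤ ‖mav B r‖ := by
    rw [mav]
    simpa only [hr, mul_one] using mul_norm_le_norm_of_mul_norm_sq_le_inner (h r)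
  have hinv : rho B⁻¹ ≤ c⁻¹ :=
    rho_inv_le_inv hB hc fun x => mul_norm_le_norm_of_mul_norm_sq_le_inner (h x)
  have hnum : rho (D * B⁻¹) ≤ rho D * c⁻¹ :=
    (rho_mul_le D B⁻¹).trans (mul_le_mul_of_nonneg_left hinv (rho_nonneg D))
  calc rho (D * B⁻¹) / ‖mav B r‖ ≤ rho D * c⁻¹ / c :=
        div_le_div₀ ((rho_nonneg _).trans hnum) hnum hc hBr
    _ = rho D / c ^ 2 := by ring

end Coercive

section SmallestEigenvalue

variable {n : ℕ}

lemma Matrix.PosDef.inner_toEuclideanLin_self_pos {A : Matrix (Fin n) (Fin n) ℝ} (hA : A.PosDef)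
    {y : EuclideanSpace ℝ (Fin n)} (hy : y ≠ 0) : 0 < inner ℝ (toEuclideanLin A y) y := by
  have h := hA.dotProduct_mulVec_pos (x := WithLp.ofLp y) (by simpa using hy)
  simpa [EuclideanSpace.inner_eq_star_dotProduct, toLpLin_apply, dotProduct_comm] using h

lemma Matrix.IsHermitian.lam1_mul_norm_sq_le_inner {A : Matrix (Fin n) (Fin n) ℝ}
    (hA : A.IsHermitian) (x : EuclideanSpace ℝ (Fin n)) :
    lam1 A * ‖x‖ ^ 2 ≤ inner ℝ (toEuclideanLin A x) x := by
  rcases eq_or_ne x 0 with rfl | hx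
  · simp
  have : Nontrivial (EuclideanSpace ℝ (Fin n)) := ⟨⟨x, 0, hx⟩⟩
  have hT : (toEuclideanLin A).IsSymmetric := isSymmetric_toEuclideanLin_iff.2 hA
  have hmin := csInf_le (Module.End.finite_hasEigenvalue (toEuclideanLin A)).bddBelow
    hT.hasEigenvalue_iInf_of_finiteDimensional
  have hbdd : BddBelow (range fun y : {y : EuclideanSpace ℝ (Fin n) // y ≠ 0} =>
      RCLike.re (inner ℝ (toEuclideanLin A y) y) / ‖(y : EuclideanSpace ℝ (Fin n))‖ ^ 2) := by
    refine ⟨-‖LinearMap.toContinuousLinearMap (toEuclideanLin A)‖, ?_⟩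
    rintro _ ⟨y, rfl⟩
    exact neg_le_of_abs_le
      ((LinearMap.toContinuousLinearMap (toEuclideanLin A)).rayleighQuotient_le_norm y)
  have h := hmin.trans (ciInf_le hbdd ⟨x, hx⟩)
  rwa [RCLike.re_to_real, le_div_iff₀ (by positivity)] at h

lemma Matrix.PosDef.lam1_pos [NeZero n] {A : Matrix (Fin n) (Fin n) ℝ} (hA : A.PosDef) :
    0 < lam1 A := by
  have hT : (toEuclideanLin A).IsSymmetric := isSymmetric_toEuclideanLin_iff.2 hA.isHermitian
  have hne : {μ | Module.End.HasEigenvalue (toEuclideanLin A) μ}.Nonempty :=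
    ⟨_, hT.hasEigenvalue_iInf_of_finiteDimensional⟩
  obtain ⟨y, hy⟩ :=
    (hne.csInf_mem (Module.End.finite_hasEigenvalue _)).exists_hasEigenvector
  have hpos := hA.inner_toEuclideanLin_self_pos hy.2
  rw [hy.apply_eq_smul, real_inner_smul_left, real_inner_self_eq_norm_sq] at hpos
  exact pos_of_mul_pos_left hpos (sq_nonneg _)

end SmallestEigenvalue

section AffineField

variable {n : ℕ}

lemma convex_setOf_forall_mul_norm_sq_le_inner (c : ℝ) :
    Convex ℝ {B : Matrix (Fin n) (Fin n) ℝ |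
      ∀ x, c * ‖x‖ ^ 2 ≤ inner ℝ (toEuclideanLin B x) x} := by
  simp only [ofPred_forall]
  refine convex_iInter fun x => convex_halfSpace_ge ⟨fun B C => ?_, fun a B => ?_⟩ _
  · simp only [map_add, LinearMap.add_apply, inner_add_left]
  · simp only [map_smul, LinearMap.smul_apply, real_inner_smul_left, smul_eq_mul]

lemma forall_mul_norm_sq_le_inner_of_mem_convexHull {ι : Type*}
    {v : ι → EuclideanSpace ℝ (Fin n)} {A : Matrix (Fin n) (Fin n) ℝ}
    {Mk : Fin n → Matrix (Fin n) (Fin n) ℝ} {c : ℝ}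
    (hv : ∀ j x, c * ‖x‖ ^ 2 ≤ inner ℝ (toEuclideanLin (A + ∑ k, v j k • Mk k) x) x)
    {p : EuclideanSpace ℝ (Fin n)} (hp : p ∈ convexHull ℝ (range v))
    (x : EuclideanSpace ℝ (Fin n)) :
    c * ‖x‖ ^ 2 ≤ inner ℝ (toEuclideanLin (A + ∑ k, p k • Mk k) x) x := by
  let Φ : EuclideanSpace ℝ (Fin n) →ₗ[ℝ] Matrix (Fin n) (Fin n) ℝ :=
    ∑ k, (EuclideanSpace.proj k : EuclideanSpace ℝ (Fin n) →L[ℝ] ℝ).toLinearMap.smulRight (Mk k)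
  have hΦ : ∀ q, Φ q = ∑ k, q k • Mk k := fun q => by simp [Φ]
  have hsub : convexHull ℝ (range v) ⊆ Φ ⁻¹' ((A + ·) ⁻¹'
      {B | ∀ x, c * ‖x‖ ^ 2 ≤ inner ℝ (toEuclideanLin B x) x}) :=
    convexHull_min
      (range_subset_iff.2 fun j => by simpa only [mem_preimage, hΦ, mem_ofPred_eq] using hv j)
      (((convex_setOf_forall_mul_norm_sq_le_inner c).translate_preimage_right A).linear_preimage Φ)
  simpa only [mem_preimage, hΦ, mem_ofPred_eq] using hsub hp x

end AffineField

theorem stmt9 {n s : ℕ} (v : Fin s → EuclideanSpace ℝ (Fin n))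
    (τ : Set (EuclideanSpace ℝ (Fin n))) (hτ : τ = convexHull ℝ (Set.range v))
    (M : EuclideanSpace ℝ (Fin n) → Matrix (Fin n) (Fin n) ℝ)
    (hMpd : ∀ p ∈ τ, (M p).PosDef)
    (A : Matrix (Fin n) (Fin n) ℝ) (Mk : Fin n → Matrix (Fin n) (Fin n) ℝ)
    (hMaff : ∀ p ∈ τ, M p = A + ∑ k, p k • Mk k) :
    ∀ p ∈ interior τ, ∀ r : EuclideanSpace ℝ (Fin n), ‖r‖ = 1 →
      rho ((∑ k, r k • Mk k) * (M p)⁻¹) / ‖mav (M p) r‖ ≤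
        Real.sqrt (∑ k, rho (Mk k) ^ 2) / (⨅ j, lam1 (M (v j))) ^ 2 := by
  intro p hp r hr
  have hpτ : p ∈ τ := interior_subset hp
  have hvτ : ∀ j, v j ∈ τ := fun j => hτ ▸ subset_convexHull ℝ _ (mem_range_self j)
  have : NeZero n := ⟨by rintro rfl; simp [Subsingleton.elim r 0] at hr⟩
  have : Nonempty (Fin s) := by
    by_contra h
    simp [hτ, range_eq_empty_iff.2 (not_nonempty_iff.1 h)] at hpτ
  set c := ⨅ j, lam1 (M (v j))
  have hc : 0 < c := by
    obtain ⟨j, hj⟩ := exists_eq_ciInf_of_finite (f := fun j => lam1 (M (v j)))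
    exact (hMpd _ (hvτ j)).lam1_pos.trans_eq hj
  have hvertex : ∀ j x, c * ‖x‖ ^ 2 ≤ inner ℝ (toEuclideanLin (A + ∑ k, v j k • Mk k) x) x :=
    fun j x => hMaff _ (hvτ j) ▸
      (mul_le_mul_of_nonneg_right (ciInf_le (finite_range _).bddBelow j) (sq_nonneg _)).trans
        ((hMpd _ (hvτ j)).isHermitian.lam1_mul_norm_sq_le_inner x)
  have hcoer : ∀ x, c * ‖x‖ ^ 2 ≤ inner ℝ (toEuclideanLin (M p) x) x := hMaff p hpτ ▸
    forall_mul_norm_sq_le_inner_of_mem_convexHull hvertex (hτ ▸ hpτ)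
  calc rho ((∑ k, r k • Mk k) * (M p)⁻¹) / ‖mav (M p) r‖ ≤ rho (∑ k, r k • Mk k) / c ^ 2 :=
        rho_mul_inv_div_norm_le _ (isUnit_iff_ne_zero.2 (hMpd p hpτ).det_pos.ne') hc hcoer hr
    _ ≤ Real.sqrt (∑ k, rho (Mk k) ^ 2) / c ^ 2 := by
        gcongr
        simpa only [hr, one_mul] using rho_sum_smul_le r Mk
end

section
/- Let M be a C¹ symmetric positive-definite matrix field on a compact convex domain Ω with differentiable-metric variation σ1, and let V ⊆ Ω be a finite asymmetric ε-net with respect to D^{DW} (i.e., a (ε,ε)-Delone set: an ε-cover and an asymmetric ε-packing). If σ1·ε ≤ 0.09868, then the Du/Wang Voronoi diagram of V (regions taken with respect to D^{DW}) is orphan-free: for every v ∈ V, every connected component of R(v) contains v. -/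
open Matrix Set

attribute [local instance] Matrix.normedAddCommGroup Matrix.normedSpace

/-!
Let `C` be a component of `R(v)` and `q ∈ C` a minimiser of `D(·, v) = ‖M_v (· - v)‖` on `C`
(`R(v)` is compact). If `q ≠ v`, moving `q` to `q + t (v - q)` multiplies `D(·, v)` by `1 - t`,
and for small `t ≥ 0` keeps it in `R(v)`, hence in `C`: a contradiction. Sites `w` with
`D(q, w) > D(q, v)` stay farther by continuity. For a tied site `w`, `D(·, w)` decreases more slowly
than `D(·, v)` as soon as `⟪M_w (q - w), M_w (q - v)⟫ < D(q, v)²`, and this is where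
`σ₁ ε ≤ 0.09868` enters. Along a segment `[a, b] ⊆ Ω`, `ψ(t) = ‖M_{a + t(b - a)} (b - a)‖`
satisfies the Riccati inequality `ψ' ≤ σ₁ ψ²`, after which Grönwall's lemma gives
`‖M_b y‖ ≤ (1 - X) / (1 - 2X) ‖M_a y‖` whenever `σ₁ ‖M_a (b - a)‖ ≤ X < 1/2`. Transporting the
metrics between `v`, `w` and `q` bounds `‖M_w (q - v)‖` from above, the packing condition bounds
`‖M_w (v - w)‖` from below, and the polarization identity turns these into the inner product bound.
-/

open Filter Topology

theorem IsCompact.connectedComponentIn {X : Type*} [TopologicalSpace X] {R : Set X}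
    (hR : IsCompact R) (p : X) : IsCompact (connectedComponentIn R p) := by
  by_cases hp : p ∈ R
  · have : CompactSpace R := isCompact_iff_compactSpace.mp hR
    rw [connectedComponentIn_eq_image hp]
    exact isClosed_connectedComponent.isCompact.image continuous_subtype_val
  · rw [connectedComponentIn_eq_empty hp]
    exact isCompact_empty

theorem mem_connectedComponentIn_of_exists_lt {X : Type*} [TopologicalSpace X] {R : Set X}
    (hR : IsCompact R) {f : X → ℝ} (hf : ContinuousOn f R) {v : X}
    (hstep : ∀ q ∈ R, q ≠ v → ∃ q' ∈ connectedComponentIn R q, f q' < f q)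
    {p : X} (hp : p ∈ R) : v ∈ connectedComponentIn R p := by
  obtain ⟨q, hqC, hqmin⟩ := (hR.connectedComponentIn p).exists_isMinOn
    ⟨p, mem_connectedComponentIn hp⟩ (hf.mono (connectedComponentIn_subset R p))
  by_contra hv
  have hqv : q ≠ v := fun h => hv (h ▸ hqC)
  obtain ⟨q', hq'C, hlt⟩ := hstep q (connectedComponentIn_subset R p hqC) hqv
  rw [← connectedComponentIn_eq hqC] at hq'C
  exact (hqmin hq'C).not_gt hlt

theorem exists_mem_connectedComponentIn_of_eventually_mem {E : Type*} [NormedAddCommGroup E]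
    [NormedSpace ℝ E] {R : Set E} {q v : E}
    (h : ∀ᶠ t in 𝓝[≥] (0 : ℝ), q + t • (v - q) ∈ R) :
    ∃ t ∈ Ioo (0 : ℝ) 1, q + t • (v - q) ∈ connectedComponentIn R q := by
  obtain ⟨u, hu0, hu⟩ := mem_nhdsGE_iff_exists_Icc_subset.mp (h.and (Ico_mem_nhdsGE one_pos))
  have hseg : (fun t : ℝ => q + t • (v - q)) '' Icc 0 u ⊆ connectedComponentIn R q := by
    refine (isPreconnected_Icc.image _ (by fun_prop)).subset_connectedComponentIn
      ⟨0, left_mem_Icc.mpr (le_of_lt hu0), by simp⟩ ?_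
    rintro _ ⟨t, ht, rfl⟩
    exact (hu ht).1
  exact ⟨u, ⟨hu0, (hu (right_mem_Icc.mpr (le_of_lt hu0))).2.2⟩,
    hseg ⟨u, right_mem_Icc.mpr (le_of_lt hu0), rfl⟩⟩

section InnerProductSpace

variable {F : Type*} [NormedAddCommGroup F] [InnerProductSpace ℝ F]

/-- Comparison with the Riccati equation `ψ' = σ ψ²`, whose solutions have `ψ⁻¹ + σ t` constant. -/
theorem monotoneOn_inv_norm_add_mul {u u' : ℝ → F} {D : Set ℝ} {σ : ℝ} (hD : Convex ℝ D)
    (hu : ∀ t ∈ D, HasDerivWithinAt u (u' t) D t) (hu0 : ∀ t ∈ D, u t ≠ 0)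
    (hu' : ∀ t ∈ D, ‖u' t‖ ≤ σ * ‖u t‖ ^ 2) :
    MonotoneOn (fun t => ‖u t‖⁻¹ + σ * t) D := by
  have hderiv : ∀ t ∈ D, HasDerivWithinAt (fun t => ‖u t‖⁻¹ + σ * t)
      (σ - inner ℝ (u t) (u' t) / ‖u t‖ ^ 3) D t := by
    intro t ht
    have hnorm : HasDerivWithinAt (fun t => ‖u t‖)
        (2 * inner ℝ (u t) (u' t) / (2 * ‖u t‖)) D t := by
      have := ((hu t ht).norm_sq).sqrt (by simpa using hu0 t ht)
      simpa only [Real.sqrt_sq (norm_nonneg _)] using this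
    have hne := norm_ne_zero_iff.mpr (hu0 t ht)
    refine ((hnorm.inv hne).add ((hasDerivWithinAt_id t D).const_mul σ)).congr_deriv ?_
    field_simp
    ring
  refine monotoneOn_of_hasDerivWithinAt_nonneg hD
    (fun t ht => (hderiv t ht).continuousWithinAt)
    (fun t ht => (hderiv t (interior_subset ht)).mono interior_subset) fun t ht => ?_
  have ht := interior_subset ht
  have hpos : 0 < ‖u t‖ := norm_pos_iff.mpr (hu0 t ht)
  have hinner : inner ℝ (u t) (u' t) ≤ σ * ‖u t‖ ^ 3 :=
    calc inner ℝ (u t) (u' t) ≤ ‖u t‖ * ‖u' t‖ := real_inner_le_norm _ _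
      _ ≤ ‖u t‖ * (σ * ‖u t‖ ^ 2) := by gcongr; exact hu' t ht
      _ = σ * ‖u t‖ ^ 3 := by ring
  rw [sub_nonneg, div_le_iff₀ (by positivity)]
  exact hinner

theorem eventually_mul_le_norm_sub_smul {x b : F} {s : ℝ} (hs : s ≤ ‖x‖)
    (htied : ‖x‖ = s → inner ℝ x b < s ^ 2) :
    ∀ᶠ t in 𝓝[≥] (0 : ℝ), (1 - t) * s ≤ ‖x - t • b‖ := by
  rcases hs.lt_or_eq with hlt | rfl
  · have hcont : Continuous fun t : ℝ => ‖x - t • b‖ - (1 - t) * s := by fun_prop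
    have hpos := (hcont.tendsto 0).eventually (lt_mem_nhds (a := 0) (by simpa using hlt))
    filter_upwards [nhdsWithin_le_nhds hpos] with t ht
    linarith
  · have hδ : 0 < 2 * (‖x‖ ^ 2 - inner ℝ x b) / (‖x‖ ^ 2 + 1) := by
      have := htied rfl
      apply div_pos <;> nlinarith
    filter_upwards [Icc_mem_nhdsGE hδ] with t ⟨ht0, ht⟩
    rw [le_div_iff₀ (by positivity)] at ht
    refine le_of_sq_le_sq ?_ (norm_nonneg _)
    rw [norm_sub_sq_real, inner_smul_right, norm_smul, Real.norm_eq_abs, abs_of_nonneg ht0]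
    nlinarith [mul_nonneg ht0 (sq_nonneg ‖b‖), mul_nonneg ht0 (sq_nonneg ‖x‖)]

end InnerProductSpace

namespace DuWang

variable {n : ℕ}

theorem norm_mav_le (A : Matrix (Fin n) (Fin n) ℝ) (x : EuclideanSpace ℝ (Fin n)) :
    ‖mav A x‖ ≤ rho A * ‖x‖ :=
  (LinearMap.toContinuousLinearMap (Matrix.toEuclideanLin A)).le_opNorm x

theorem mav_mul (A B : Matrix (Fin n) (Fin n) ℝ) (x : EuclideanSpace ℝ (Fin n)) :
    mav (A * B) x = mav A (mav B x) := by
  simp [mav, Matrix.toLpLin_apply, Matrix.mulVec_mulVec]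

theorem mav_sub (A : Matrix (Fin n) (Fin n) ℝ) (x y : EuclideanSpace ℝ (Fin n)) :
    mav A (x - y) = mav A x - mav A y :=
  map_sub _ x y

theorem mav_smul (A : Matrix (Fin n) (Fin n) ℝ) (c : ℝ) (x : EuclideanSpace ℝ (Fin n)) :
    mav A (c • x) = c • mav A x :=
  map_smul _ c x

theorem norm_mav_sub_comm (A : Matrix (Fin n) (Fin n) ℝ) (x y : EuclideanSpace ℝ (Fin n)) :
    ‖mav A (x - y)‖ = ‖mav A (y - x)‖ := by
  rw [mav_sub, mav_sub, norm_sub_rev]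

theorem continuous_mav (A : Matrix (Fin n) (Fin n) ℝ) : Continuous (mav A) :=
  (LinearMap.toContinuousLinearMap (Matrix.toEuclideanLin A)).continuous

theorem rho_nonneg (A : Matrix (Fin n) (Fin n) ℝ) : 0 ≤ rho A := norm_nonneg _

theorem rho_smul (c : ℝ) (A : Matrix (Fin n) (Fin n) ℝ) : rho (c • A) = |c| * rho A := by
  simp [rho, norm_smul]

theorem mav_ne_zero {A : Matrix (Fin n) (Fin n) ℝ} (hA : A.PosDef) {x : EuclideanSpace ℝ (Fin n)}
    (hx : x ≠ 0) : mav A x ≠ 0 := by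
  intro h
  have hmul : A *ᵥ x.ofLp = 0 := by simpa [mav, Matrix.toLpLin_apply] using h
  have hpos := hA.dotProduct_mulVec_pos (x := x.ofLp) (by rwa [Ne, WithLp.ofLp_eq_zero])
  rw [hmul, dotProduct_zero] at hpos
  exact hpos.false

noncomputable def mavCLM (y : EuclideanSpace ℝ (Fin n)) :
    Matrix (Fin n) (Fin n) ℝ →L[ℝ] EuclideanSpace ℝ (Fin n) :=
  LinearMap.toContinuousLinearMap
    ((LinearMap.applyₗ y).comp (Matrix.toEuclideanLin (𝕜 := ℝ) (n := Fin n)).toLinearMap)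

variable {Ω : Set (EuclideanSpace ℝ (Fin n))}
  {M : EuclideanSpace ℝ (Fin n) → Matrix (Fin n) (Fin n) ℝ} {σ1 : ℝ}

theorem sigma1_nonneg (hσ1 : IsLUB (sigma1Set Ω M) σ1) : 0 ≤ σ1 := by
  obtain ⟨x, hx⟩ := hσ1.nonempty
  have hle := hσ1.1 hx
  obtain ⟨p, -, r, -, rfl⟩ := hx
  exact (div_nonneg (rho_nonneg _) (norm_nonneg _)).trans hle

theorem rho_fderivWithin_mul_inv_le (hMpd : ∀ p ∈ Ω, (M p).PosDef)
    (hσ1 : IsLUB (sigma1Set Ω M) σ1) {p : EuclideanSpace ℝ (Fin n)} (hp : p ∈ Ω)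
    (r : EuclideanSpace ℝ (Fin n)) :
    rho (fderivWithin ℝ M Ω p r * (M p)⁻¹) ≤ σ1 * ‖mav (M p) r‖ := by
  rcases eq_or_ne r 0 with rfl | hr
  · simp [rho, mav]
  have hr' : ‖‖r‖⁻¹ • r‖ = 1 := norm_smul_inv_norm hr
  have hunit := hσ1.1 ⟨p, hp, _, hr', rfl⟩
  rw [div_le_iff₀ (norm_pos_iff.mpr (mav_ne_zero (hMpd p hp) (ne_zero_of_norm_ne_zero
    (hr'.symm ▸ one_ne_zero)))), map_smul, smul_mul_assoc, rho_smul, mav_smul, norm_smul] at hunit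
  have hpos : 0 < ‖r‖ := norm_pos_iff.mpr hr
  simp only [abs_inv, abs_norm, norm_inv, norm_norm] at hunit
  rw [inv_mul_le_iff₀ hpos] at hunit
  calc _ ≤ ‖r‖ * (σ1 * (‖r‖⁻¹ * ‖mav (M p) r‖)) := hunit
    _ = σ1 * ‖mav (M p) r‖ := by field_simp

theorem norm_mav_fderivWithin_le (hMpd : ∀ p ∈ Ω, (M p).PosDef)
    (hσ1 : IsLUB (sigma1Set Ω M) σ1) {p : EuclideanSpace ℝ (Fin n)} (hp : p ∈ Ω)
    (r y : EuclideanSpace ℝ (Fin n)) :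
    ‖mav (fderivWithin ℝ M Ω p r) y‖ ≤ σ1 * ‖mav (M p) r‖ * ‖mav (M p) y‖ := by
  have hfactor : fderivWithin ℝ M Ω p r * (M p)⁻¹ * M p = fderivWithin ℝ M Ω p r :=
    Matrix.nonsing_inv_mul_cancel_right _ _ ((M p).isUnit_iff_isUnit_det.mp (hMpd p hp).isUnit)
  calc ‖mav (fderivWithin ℝ M Ω p r) y‖
      = ‖mav (fderivWithin ℝ M Ω p r * (M p)⁻¹) (mav (M p) y)‖ := by rw [← mav_mul, hfactor]
    _ ≤ rho (fderivWithin ℝ M Ω p r * (M p)⁻¹) * ‖mav (M p) y‖ := norm_mav_le _ _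
    _ ≤ σ1 * ‖mav (M p) r‖ * ‖mav (M p) y‖ := by
      gcongr; exact rho_fderivWithin_mul_inv_le hMpd hσ1 hp r

theorem hasDerivWithinAt_mav_segment (hΩconv : Convex ℝ Ω) (hMc1 : ContDiffOn ℝ 1 M Ω)
    {a b : EuclideanSpace ℝ (Fin n)} (ha : a ∈ Ω) (hb : b ∈ Ω) (y : EuclideanSpace ℝ (Fin n))
    {t : ℝ} (ht : t ∈ Icc (0 : ℝ) 1) :
    HasDerivWithinAt (fun s : ℝ => mav (M (a + s • (b - a))) y)
      (mav (fderivWithin ℝ M Ω (a + t • (b - a)) (b - a)) y) (Icc 0 1) t := by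
  have hmaps : MapsTo (fun s : ℝ => a + s • (b - a)) (Icc 0 1) Ω :=
    fun s hs => hΩconv.add_smul_sub_mem ha hb hs
  have hγ : HasDerivWithinAt (fun s : ℝ => a + s • (b - a)) (b - a) (Icc 0 1) t := by
    simpa using (((hasDerivAt_id t).smul_const (b - a)).const_add a).hasDerivWithinAt
  have hM := ((hMc1.differentiableOn one_ne_zero) _ (hmaps ht)).hasFDerivWithinAt
  exact (mavCLM y).hasFDerivAt.comp_hasDerivWithinAt t (hM.comp_hasDerivWithinAt t hγ hmaps)

theorem sigma1_mul_norm_mav_segment_le (hΩconv : Convex ℝ Ω) (hMc1 : ContDiffOn ℝ 1 M Ω)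
    (hMpd : ∀ p ∈ Ω, (M p).PosDef) (hσ1 : IsLUB (sigma1Set Ω M) σ1)
    {a b : EuclideanSpace ℝ (Fin n)} (ha : a ∈ Ω) (hb : b ∈ Ω) {X : ℝ} (hX1 : X < 1)
    (hX : σ1 * ‖mav (M a) (b - a)‖ ≤ X) {t : ℝ} (ht : t ∈ Icc (0 : ℝ) 1) :
    σ1 * ‖mav (M (a + t • (b - a))) (b - a)‖ ≤ X / (1 - X) := by
  have hσ0 := sigma1_nonneg hσ1
  have hX0 : 0 ≤ X := (mul_nonneg hσ0 (norm_nonneg _)).trans hX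
  rcases eq_or_ne b a with rfl | hba
  · simpa [mav] using div_nonneg hX0 (sub_nonneg.mpr hX1.le)
  have hmaps : MapsTo (fun s : ℝ => a + s • (b - a)) (Icc 0 1) Ω :=
    fun s hs => hΩconv.add_smul_sub_mem ha hb hs
  have hmono := monotoneOn_inv_norm_add_mul (convex_Icc (0 : ℝ) 1)
    (fun s hs => hasDerivWithinAt_mav_segment hΩconv hMc1 ha hb (b - a) hs)
    (fun s hs => mav_ne_zero (hMpd _ (hmaps hs)) (sub_ne_zero.mpr hba))
    (fun s hs => (norm_mav_fderivWithin_le hMpd hσ1 (hmaps hs) _ _).trans_eq (by ring))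
    (left_mem_Icc.mpr zero_le_one) ht ht.1
  simp only [zero_smul, add_zero, mul_zero] at hmono
  set c := ‖mav (M a) (b - a)‖
  set ψ := ‖mav (M (a + t • (b - a))) (b - a)‖
  have hc : 0 < c := norm_pos_iff.mpr (mav_ne_zero (hMpd a ha) (sub_ne_zero.mpr hba))
  have hψ : 0 < ψ := norm_pos_iff.mpr (mav_ne_zero (hMpd _ (hmaps ht)) (sub_ne_zero.mpr hba))
  have hψc : ψ * (1 - σ1 * c) ≤ c := by
    have : c⁻¹ ≤ ψ⁻¹ + σ1 := hmono.trans (by nlinarith [ht.2])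
    rw [inv_le_iff_one_le_mul₀ hc] at this
    field_simp at this
    nlinarith
  rw [le_div_iff₀ (by linarith)]
  nlinarith [mul_le_mul_of_nonneg_left hψc hσ0]

theorem norm_mav_le_of_sigma1_mul_le (hΩconv : Convex ℝ Ω) (hMc1 : ContDiffOn ℝ 1 M Ω)
    (hMpd : ∀ p ∈ Ω, (M p).PosDef) (hσ1 : IsLUB (sigma1Set Ω M) σ1)
    {a b : EuclideanSpace ℝ (Fin n)} (ha : a ∈ Ω) (hb : b ∈ Ω) {X : ℝ} (hX2 : X < 1 / 2)
    (hX : σ1 * ‖mav (M a) (b - a)‖ ≤ X) (y : EuclideanSpace ℝ (Fin n)) :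
    ‖mav (M b) y‖ ≤ (1 - X) / (1 - 2 * X) * ‖mav (M a) y‖ := by
  have hX0 : 0 ≤ X := (mul_nonneg (sigma1_nonneg hσ1) (norm_nonneg _)).trans hX
  have hmaps : MapsTo (fun s : ℝ => a + s • (b - a)) (Icc 0 1) Ω :=
    fun s hs => hΩconv.add_smul_sub_mem ha hb hs
  have hderiv := fun s (hs : s ∈ Icc (0 : ℝ) 1) =>
    hasDerivWithinAt_mav_segment hΩconv hMc1 ha hb y hs
  have hgronwall := norm_le_gronwallBound_of_norm_deriv_right_le (K := X / (1 - X)) (ε := 0)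
    (fun s hs => (hderiv s hs).continuousWithinAt)
    (fun s hs => (hderiv s (Ico_subset_Icc_self hs)).mono_of_mem_nhdsWithin
      (Icc_mem_nhdsGE_of_mem hs))
    le_rfl
    (fun s hs => by
      have hs := Ico_subset_Icc_self hs
      calc _ ≤ σ1 * ‖mav (M (a + s • (b - a))) (b - a)‖ * ‖mav (M (a + s • (b - a))) y‖ :=
            norm_mav_fderivWithin_le hMpd hσ1 (hmaps hs) _ _
        _ ≤ X / (1 - X) * ‖mav (M (a + s • (b - a))) y‖ + 0 := by
            rw [add_zero]
            gcongr
            exact sigma1_mul_norm_mav_segment_le hΩconv hMc1 hMpd hσ1 ha hb (by linarith) hX hs)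
    1 (right_mem_Icc.mpr zero_le_one)
  have hexp : Real.exp (X / (1 - X)) ≤ (1 - X) / (1 - 2 * X) := by
    refine (Real.exp_bound_div_one_sub_of_interval (by bound) ?_).trans_eq ?_
    · rw [div_lt_one (by linarith)]; linarith
    · rw [one_sub_div (by linarith), one_div_div]
      ring_nf
  simp only [gronwallBound_ε0, sub_zero, mul_one, one_smul, zero_smul, add_zero,
    add_sub_cancel] at hgronwall
  rw [mul_comm]
  exact hgronwall.trans (by gcongr)

theorem inner_mav_lt_sq_of_tied (hΩconv : Convex ℝ Ω) (hMc1 : ContDiffOn ℝ 1 M Ω)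
    (hMpd : ∀ p ∈ Ω, (M p).PosDef) (hσ1 : IsLUB (sigma1Set Ω M) σ1)
    {q v w : EuclideanSpace ℝ (Fin n)} (hq : q ∈ Ω) (hv : v ∈ Ω) (hw : w ∈ Ω) {s ε : ℝ}
    (hs : 0 < s) (hsv : ‖mav (M v) (q - v)‖ = s) (hsw : ‖mav (M w) (q - w)‖ = s)
    (hsε : s ≤ ε) (hcond : σ1 * ε ≤ 0.09868)
    (hpack : ε ≤ ‖mav (M w) (v - w)‖ ∨ ε ≤ ‖mav (M v) (w - v)‖) :
    inner ℝ (mav (M w) (q - w)) (mav (M w) (q - v)) < s ^ 2 := by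
  have hσ0 := sigma1_nonneg hσ1
  have hcs : σ1 * s ≤ 0.09868 := (mul_le_mul_of_nonneg_left hsε hσ0).trans hcond
  -- `1.123` and `1.143` bound `(1 - X) / (1 - 2X)` at `X = 0.09868` and at
  -- `X = 0.111 ≥ 1.123 * 0.09868`
  have transport₁ : ∀ {a b}, a ∈ Ω → b ∈ Ω → σ1 * ‖mav (M a) (b - a)‖ ≤ 0.09868 →
      ∀ y, ‖mav (M b) y‖ ≤ 1.123 * ‖mav (M a) y‖ := fun ha hb h y =>
    (norm_mav_le_of_sigma1_mul_le hΩconv hMc1 hMpd hσ1 ha hb (by norm_num) h y).trans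
      (mul_le_mul_of_nonneg_right (by norm_num) (norm_nonneg _))
  have transport₂ : ∀ {a b}, a ∈ Ω → b ∈ Ω → σ1 * ‖mav (M a) (b - a)‖ ≤ 0.111 →
      ∀ y, ‖mav (M b) y‖ ≤ 1.143 * ‖mav (M a) y‖ := fun ha hb h y =>
    (norm_mav_le_of_sigma1_mul_le hΩconv hMc1 hMpd hσ1 ha hb (by norm_num) h y).trans
      (mul_le_mul_of_nonneg_right (by norm_num) (norm_nonneg _))
  have hqw : ‖mav (M q) (w - q)‖ ≤ 1.123 * s := by
    have := transport₁ hw hq (hsw ▸ hcs) (w - q)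
    rwa [norm_mav_sub_comm (M w), hsw] at this
  have hb : ‖mav (M w) (q - v)‖ ≤ 1.143 * (1.123 * s) := by
    have hqv := transport₁ hv hq (hsv ▸ hcs) (q - v)
    rw [hsv] at hqv
    refine (transport₂ hq hw ?_ (q - v)).trans (by gcongr)
    nlinarith [mul_le_mul_of_nonneg_left hqw hσ0]
  have hvw : s ≤ 1.123 * ‖mav (M w) (v - w)‖ := by
    by_cases hfar : s ≤ ‖mav (M w) (v - w)‖
    · linarith [norm_nonneg (mav (M w) (v - w))]
    rcases hpack with hpack | hpack
    · linarith
    have hclose : σ1 * ‖mav (M w) (v - w)‖ ≤ 0.09868 :=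
      (mul_le_mul_of_nonneg_left (not_le.mp hfar).le hσ0).trans hcs
    have := transport₁ hw hv hclose (w - v)
    rw [norm_mav_sub_comm (M w) w v] at this
    linarith
  have hdiff : mav (M w) (q - w) - mav (M w) (q - v) = mav (M w) (v - w) := by
    rw [← mav_sub, sub_sub_sub_cancel_left]
  have hpolar := norm_sub_sq_real (mav (M w) (q - w)) (mav (M w) (q - v))
  rw [hdiff, hsw] at hpolar
  nlinarith [mul_self_le_mul_self (norm_nonneg _) hb, mul_self_le_mul_self hs.le hvw]

theorem isCompact_vorRegion {Ω V : Set (EuclideanSpace ℝ (Fin n))} (hΩ : IsCompact Ω)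
    {D : EuclideanSpace ℝ (Fin n) → EuclideanSpace ℝ (Fin n) → ℝ}
    (hD : ∀ w, Continuous fun p => D p w) (v : EuclideanSpace ℝ (Fin n)) :
    IsCompact (vorRegion Ω V D v) := by
  refine hΩ.inter_right (t := {p | ∀ w ∈ V, D p v ≤ D p w}) ?_
  simp only [ofPred_forall]
  exact isClosed_biInter fun w _ => isClosed_le (hD v) (hD w)

variable {V : Set (EuclideanSpace ℝ (Fin n))}

theorem eventually_segment_mem_vorRegion (hΩconv : Convex ℝ Ω) (hVfin : V.Finite)
    {v q : EuclideanSpace ℝ (Fin n)} (hv : v ∈ Ω)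
    (hq : q ∈ vorRegion Ω V (fun a b => ‖mav (M b) (a - b)‖) v)
    (htied : ∀ w ∈ V, w ≠ v → ‖mav (M w) (q - w)‖ = ‖mav (M v) (q - v)‖ →
      inner ℝ (mav (M w) (q - w)) (mav (M w) (q - v)) < ‖mav (M v) (q - v)‖ ^ 2) :
    ∀ᶠ t in 𝓝[≥] (0 : ℝ), q + t • (v - q) ∈ vorRegion Ω V (fun a b => ‖mav (M b) (a - b)‖) v := by
  have hΩ : ∀ᶠ t in 𝓝[≥] (0 : ℝ), q + t • (v - q) ∈ Ω :=
    mem_of_superset (Icc_mem_nhdsGE one_pos) fun t ht => hΩconv.add_smul_sub_mem hq.1 hv ht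
  have hV : ∀ᶠ t in 𝓝[≥] (0 : ℝ), ∀ w ∈ V,
      ‖mav (M v) (q + t • (v - q) - v)‖ ≤ ‖mav (M w) (q + t • (v - q) - w)‖ := by
    refine (eventually_all_finite hVfin).mpr fun w hw => ?_
    rcases eq_or_ne w v with rfl | hwv
    · exact Eventually.of_forall fun t => le_rfl
    filter_upwards [eventually_mul_le_norm_sub_smul (hq.2 w hw) (htied w hw hwv),
      Icc_mem_nhdsGE one_pos] with t ht ht1
    rw [show q + t • (v - q) - v = (1 - t) • (q - v) by module,
      show q + t • (v - q) - w = (q - w) - t • (q - v) by module, mav_smul, norm_smul,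
      mav_sub (M w), mav_smul, Real.norm_eq_abs, abs_of_nonneg (sub_nonneg.mpr ht1.2)]
    exact ht
  filter_upwards [hΩ, hV] with t h1 h2 using ⟨h1, h2⟩

theorem exists_lt_mem_connectedComponentIn_vorRegion (hΩconv : Convex ℝ Ω)
    (hMc1 : ContDiffOn ℝ 1 M Ω) (hMpd : ∀ p ∈ Ω, (M p).PosDef) (hVfin : V.Finite)
    (hVsub : V ⊆ Ω) {ε : ℝ} (hσ1 : IsLUB (sigma1Set Ω M) σ1)
    (hcover : ∀ p ∈ Ω, ∃ v ∈ V, ‖mav (M v) (p - v)‖ ≤ ε)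
    (hpack : ∀ v ∈ V, ∀ w ∈ V, v ≠ w →
      ε ≤ ‖mav (M w) (v - w)‖ ∨ ε ≤ ‖mav (M v) (w - v)‖)
    (hcond : σ1 * ε ≤ 0.09868) {v q : EuclideanSpace ℝ (Fin n)} (hv : v ∈ V)
    (hq : q ∈ vorRegion Ω V (fun a b => ‖mav (M b) (a - b)‖) v) (hqv : q ≠ v) :
    ∃ q' ∈ connectedComponentIn (vorRegion Ω V (fun a b => ‖mav (M b) (a - b)‖) v) q,
      ‖mav (M v) (q' - v)‖ < ‖mav (M v) (q - v)‖ := by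
  have hs : 0 < ‖mav (M v) (q - v)‖ :=
    norm_pos_iff.mpr (mav_ne_zero (hMpd v (hVsub hv)) (sub_ne_zero.mpr hqv))
  obtain ⟨w₀, hw₀, hcov⟩ := hcover q hq.1
  have hev := eventually_segment_mem_vorRegion hΩconv hVfin (hVsub hv) hq fun w hw hwv htie =>
    inner_mav_lt_sq_of_tied hΩconv hMc1 hMpd hσ1 hq.1 (hVsub hv) (hVsub hw) hs rfl htie
      ((hq.2 w₀ hw₀).trans hcov) hcond (hpack v hv w hw hwv.symm)
  obtain ⟨t, ht, hmem⟩ := exists_mem_connectedComponentIn_of_eventually_mem hev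
  refine ⟨_, hmem, ?_⟩
  rw [show q + t • (v - q) - v = (1 - t) • (q - v) by module, mav_smul, norm_smul,
    Real.norm_eq_abs, abs_of_pos (sub_pos.mpr ht.2)]
  exact mul_lt_of_lt_one_left hs (by linarith [ht.1])

end DuWang

theorem stmt12 {n : ℕ} (Ω : Set (EuclideanSpace ℝ (Fin n)))
    (hΩc : IsCompact Ω) (hΩconv : Convex ℝ Ω)
    (M : EuclideanSpace ℝ (Fin n) → Matrix (Fin n) (Fin n) ℝ)
    (hMc1 : ContDiffOn ℝ 1 M Ω) (hMpd : ∀ p ∈ Ω, (M p).PosDef)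
    (V : Set (EuclideanSpace ℝ (Fin n))) (hVfin : V.Finite) (hVsub : V ⊆ Ω)
    (ε σ1 : ℝ) (hσ1 : IsLUB (sigma1Set Ω M) σ1)
    (hcover : ∀ p ∈ Ω, ∃ v ∈ V, ‖mav (M v) (p - v)‖ ≤ ε)
    (hpack : ∀ v ∈ V, ∀ w ∈ V, v ≠ w →
      ε ≤ ‖mav (M w) (v - w)‖ ∨ ε ≤ ‖mav (M v) (w - v)‖)
    (hcond : σ1 * ε ≤ 0.09868) :
    ∀ v ∈ V, ∀ p ∈ vorRegion Ω V (fun a b => ‖mav (M b) (a - b)‖) v,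
      v ∈ connectedComponentIn (vorRegion Ω V (fun a b => ‖mav (M b) (a - b)‖) v) p := by
  intro v hv p hp
  have hdist : ∀ w, Continuous fun a => ‖mav (M w) (a - w)‖ := fun w =>
    ((DuWang.continuous_mav (M w)).comp (continuous_sub_right w)).norm
  exact mem_connectedComponentIn_of_exists_lt (DuWang.isCompact_vorRegion hΩc hdist v)
    (hdist v).continuousOn
    (fun q hq hqv => DuWang.exists_lt_mem_connectedComponentIn_vorRegion hΩconv hMc1 hMpd hVfin
      hVsub hσ1 hcover hpack hcond hv hq hqv) hp
end
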